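/- arXiv:1703.06305 — 3 statements merged into one kernel-verified Lean document; each statement's English description precedes it below -/
import Mathlib

section
/- Fix integers 0 ≤ ℓ < k, let n = k + ℓ + 3, and let F be the abstract simplicial complex on vertex set [n] ∪ {p} whose faces are all subsets of [n] of size at most k + 1 and all sets {p} ∪ σ with σ ⊆ [n] of size at most ℓ + 1. Let σ, τ be disjoint faces of F with dim σ = s, dim τ = t, s + t = k + ℓ, s ≤ t, and s = ℓ (hence t = k). Then: (i) there is no (t+1)-dimensional face of F containing τ and disjoint from σ, and (ii) there are exactly two (s+1)-dimensional faces of F containing σ and disjoint from τ. -/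
/-!
Every face of `F` has at most `k + 1` vertices, because `ℓ + 2 ≤ k + 1`; so no face has the
`k + 2` vertices needed in (i). For the same reason every `(ℓ + 2)`-subset of the vertex set is a
face, so the faces in (ii) are the sets `σ ∪ {x}` with `x` one of the
`(k + ℓ + 4) - (ℓ + 1) - (k + 1) = 2` vertices outside `σ ∪ τ`.
-/

/-- The complex `F` on vertex set `[n] ∪ {p}` (with `p = 0`, `[n] = {1,…,n}`):
faces are nonempty subsets of `[n]` of size at most `k+1` together with
nonempty sets containing `0` of size at most `ℓ+2`. -/
def isFaceF (k l n : ℕ) (σ : Finset ℕ) : Prop :=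
  σ.Nonempty ∧ σ ⊆ insert 0 (Finset.Icc 1 n) ∧
    (if 0 ∈ σ then σ.card ≤ l + 2 else σ.card ≤ k + 1)

namespace Finset

variable {α : Type*} [DecidableEq α]

theorem setOf_supersets_card_succ_eq_image {s W : Finset α} (hsW : s ⊆ W) :
    {ν : Finset α | s ⊆ ν ∧ ν ⊆ W ∧ ν.card = s.card + 1} =
      ↑((W \ s).image fun a => insert a s) := by
  ext ν
  simp only [Set.mem_ofPred_eq, coe_image, Set.mem_image, mem_coe, mem_sdiff]
  constructor
  · rintro ⟨hsν, hνW, hcard⟩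
    obtain ⟨a, ha, rfl⟩ := exists_eq_insert_iff.mpr ⟨hsν, hcard.symm⟩
    exact ⟨a, ⟨hνW (mem_insert_self a s), ha⟩, rfl⟩
  · rintro ⟨a, ⟨haW, ha⟩, rfl⟩
    exact ⟨subset_insert a s, insert_subset haW hsW, card_insert_of_notMem ha⟩

theorem ncard_setOf_supersets_card_succ {s W : Finset α} (hsW : s ⊆ W) :
    {ν : Finset α | s ⊆ ν ∧ ν ⊆ W ∧ ν.card = s.card + 1}.ncard = W.card - s.card := by
  rw [setOf_supersets_card_succ_eq_image hsW, Set.ncard_coe_finset,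
    card_image_of_injOn fun a ha b _ hab => (insert_inj (mem_sdiff.mp ha).2).mp hab,
    card_sdiff_of_subset hsW]

end Finset

theorem card_insert_zero_Icc_one (n : ℕ) : (insert 0 (Finset.Icc 1 n)).card = n + 1 := by
  rw [Finset.card_insert_of_notMem (by simp), Nat.card_Icc, Nat.add_sub_cancel]

section

variable {k l n : ℕ} {ν : Finset ℕ}

theorem isFaceF.card_le (hl : l < k) (hν : isFaceF k l n ν) : ν.card ≤ k + 1 := by
  obtain ⟨-, -, hcard⟩ := hν
  split_ifs at hcard <;> omega

theorem isFaceF_iff_subset_of_card_eq (hl : l < k) (hcard : ν.card = l + 2) :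
    isFaceF k l n ν ↔ ν ⊆ insert 0 (Finset.Icc 1 n) := by
  refine ⟨fun hν => hν.2.1, fun hsub => ⟨?_, hsub, ?_⟩⟩
  · rw [← Finset.card_pos]; omega
  · split_ifs <;> omega

end

/-- for disjoint faces σ, τ of F with dim σ = ℓ, dim τ = k:
(i) no (k+1)-dimensional face contains τ and is disjoint from σ;
(ii) exactly two (ℓ+1)-dimensional faces contain σ and are disjoint from τ. -/
theorem stmt5 (k l : ℕ) (hl : l < k) (σ τ : Finset ℕ)
    (hσ : isFaceF k l (k + l + 3) σ) (hτ : isFaceF k l (k + l + 3) τ)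
    (hdisj : Disjoint σ τ) (hcσ : σ.card = l + 1) (hcτ : τ.card = k + 1) :
    {ν : Finset ℕ | isFaceF k l (k + l + 3) ν ∧ τ ⊆ ν ∧ ν.card = k + 2 ∧
      Disjoint ν σ} = ∅ ∧
    {ν : Finset ℕ | isFaceF k l (k + l + 3) ν ∧ σ ⊆ ν ∧ ν.card = l + 2 ∧
      Disjoint ν τ}.ncard = 2 := by
  set V := insert 0 (Finset.Icc 1 (k + l + 3))
  refine ⟨Set.eq_empty_of_forall_notMem fun ν ⟨hν, _, hcard, _⟩ => ?_, ?_⟩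
  · have := hν.card_le hl
    omega
  have hσW : σ ⊆ V \ τ := Finset.subset_sdiff.mpr ⟨hσ.2.1, hdisj⟩
  have hextensions :
      {ν : Finset ℕ | isFaceF k l (k + l + 3) ν ∧ σ ⊆ ν ∧ ν.card = l + 2 ∧ Disjoint ν τ} =
        {ν : Finset ℕ | σ ⊆ ν ∧ ν ⊆ V \ τ ∧ ν.card = σ.card + 1} := by
    ext ν
    simp only [Set.mem_ofPred_eq, Finset.subset_sdiff, hcσ]
    constructor
    · rintro ⟨hν, hσν, hcard, hντ⟩
      exact ⟨hσν, ⟨hν.2.1, hντ⟩, hcard⟩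
    · rintro ⟨hσν, ⟨hνV, hντ⟩, hcard⟩
      exact ⟨(isFaceF_iff_subset_of_card_eq hl hcard).mpr hνV, hσν, hcard, hντ⟩
  rw [hextensions, Finset.ncard_setOf_supersets_card_succ hσW,
    Finset.card_sdiff_of_subset hτ.2.1, card_insert_zero_Icc_one, hcσ, hcτ]
  omega
end

section
/- Fix integers 0 ≤ ℓ < k, let n = k + ℓ + 3, and let F be the abstract simplicial complex on vertex set [n] ∪ {p} whose faces are all subsets of [n] of size at most k + 1 and all sets {p} ∪ σ with σ ⊆ [n] of size at most ℓ + 1. Let σ, τ be disjoint faces of F with dim σ = s, dim τ = t, s + t = k + ℓ, ℓ < s ≤ t, and suppose neither σ nor τ contains p. Then there is exactly one (s+1)-dimensional face of F containing σ and disjoint from τ, and exactly one (t+1)-dimensional face of F containing τ and disjoint from σ. -/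
theorem Finset.setOf_superset_card_succ_disjoint_eq_singleton {α : Type*} [DecidableEq α]
    {U σ τ : Finset α} {q : α} (hσU : σ ⊆ U) (hστ : Disjoint σ τ) (hq : U \ (σ ∪ τ) = {q}) :
    {ν : Finset α | ν ⊆ U ∧ σ ⊆ ν ∧ ν.card = σ.card + 1 ∧ Disjoint ν τ} = {insert q σ} := by
  have hq' : q ∈ U ∧ q ∉ σ ∧ q ∉ τ := by
    simpa [Finset.mem_sdiff, not_or] using hq.ge (Finset.mem_singleton_self q)
  ext ν
  simp only [Set.mem_ofPred, Set.mem_singleton_iff]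
  constructor
  · rintro ⟨hνU, hσν, hcard, hντ⟩
    obtain ⟨x, hxσ, rfl⟩ := Finset.exists_eq_insert_iff.2 ⟨hσν, hcard.symm⟩
    have hxτ : x ∉ τ := Finset.disjoint_left.1 hντ (Finset.mem_insert_self x σ)
    have hx : x ∈ U \ (σ ∪ τ) := by
      simp [hνU (Finset.mem_insert_self x σ), hxσ, hxτ]
    rw [hq, Finset.mem_singleton] at hx
    rw [hx]
  · rintro rfl
    exact ⟨Finset.insert_subset hq'.1 hσU, Finset.subset_insert q σ,
      Finset.card_insert_of_notMem hq'.2.1, Finset.disjoint_insert_left.2 ⟨hq'.2.2, hστ⟩⟩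

section FaceF

variable {k l n : ℕ} {ν : Finset ℕ}

theorem isFaceF.subset_Icc (hν : isFaceF k l n ν) (h0 : 0 ∉ ν) : ν ⊆ Finset.Icc 1 n :=
  fun x hx ↦ (Finset.mem_insert.1 (hν.2.1 hx)).resolve_left (by rintro rfl; exact h0 hx)

theorem isFaceF_iff_of_lt_card (hν : l + 2 < ν.card) :
    isFaceF k l n ν ↔ ν ⊆ Finset.Icc 1 n ∧ ν.card ≤ k + 1 := by
  constructor
  · intro hface
    have hcard := hface.2.2
    have h0 : 0 ∉ ν := fun h0 ↦ by rw [if_pos h0] at hcard; omega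
    rw [if_neg h0] at hcard
    exact ⟨hface.subset_Icc h0, hcard⟩
  · rintro ⟨hνIcc, hcard⟩
    have h0 : 0 ∉ ν := fun h0 ↦ by simpa using hνIcc h0
    refine ⟨Finset.card_pos.1 (by omega), hνIcc.trans (Finset.subset_insert 0 _), ?_⟩
    rwa [if_neg h0]

end FaceF

theorem ncard_setOf_isFaceF_extension_eq_one {k l n : ℕ} {σ τ : Finset ℕ}
    (hσ : isFaceF k l n σ) (hτ : isFaceF k l n τ) (h0σ : 0 ∉ σ) (h0τ : 0 ∉ τ)
    (hdisj : Disjoint σ τ) (hn : σ.card + τ.card + 1 = n) (hlσ : l + 2 ≤ σ.card)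
    (hσk : σ.card ≤ k) :
    {ν : Finset ℕ | isFaceF k l n ν ∧ σ ⊆ ν ∧ ν.card = σ.card + 1 ∧ Disjoint ν τ}.ncard = 1 := by
  have hσU := hσ.subset_Icc h0σ
  obtain ⟨q, hq⟩ : ∃ q, Finset.Icc 1 n \ (σ ∪ τ) = {q} := by
    refine Finset.card_eq_one.1 ?_
    rw [Finset.card_sdiff_of_subset (Finset.union_subset hσU (hτ.subset_Icc h0τ)),
      Finset.card_union_of_disjoint hdisj, Nat.card_Icc]
    omega
  have hfaces : {ν : Finset ℕ | isFaceF k l n ν ∧ σ ⊆ ν ∧ ν.card = σ.card + 1 ∧ Disjoint ν τ} =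
      {ν | ν ⊆ Finset.Icc 1 n ∧ σ ⊆ ν ∧ ν.card = σ.card + 1 ∧ Disjoint ν τ} := by
    ext ν
    refine and_congr_left fun ⟨_, hcard, _⟩ ↦ ?_
    rw [isFaceF_iff_of_lt_card (by omega), and_iff_left (by omega)]
  rw [hfaces, Finset.setOf_superset_card_succ_disjoint_eq_singleton hσU hdisj hq,
    Set.ncard_singleton]

theorem stmt6_general (k l s t : ℕ) (σ τ : Finset ℕ)
    (hσ : isFaceF k l (k + l + 3) σ) (hτ : isFaceF k l (k + l + 3) τ)
    (hdisj : Disjoint σ τ) (hcσ : σ.card = s + 1) (hcτ : τ.card = t + 1)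
    (hst : s + t = k + l) (hls : l < s) (hstle : s ≤ t)
    (h0σ : 0 ∉ σ) (h0τ : 0 ∉ τ) :
    {ν : Finset ℕ | isFaceF k l (k + l + 3) ν ∧ σ ⊆ ν ∧ ν.card = s + 2 ∧
      Disjoint ν τ}.ncard = 1 ∧
    {ν : Finset ℕ | isFaceF k l (k + l + 3) ν ∧ τ ⊆ ν ∧ ν.card = t + 2 ∧
      Disjoint ν σ}.ncard = 1 := by
  constructor
  · simpa only [hcσ] using ncard_setOf_isFaceF_extension_eq_one hσ hτ h0σ h0τ hdisj
      (by omega) (by omega) (by omega)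
  · simpa only [hcτ] using ncard_setOf_isFaceF_extension_eq_one hτ hσ h0τ h0σ hdisj.symm
      (by omega) (by omega) (by omega)

/-- for disjoint faces σ, τ of F with dim σ = s, dim τ = t,
s + t = k + ℓ, ℓ < s ≤ t, neither containing p: each of σ and τ has exactly one
extension to a face of one dimension higher disjoint from the other. -/
theorem stmt6 (k l s t : ℕ) (hl : l < k) (σ τ : Finset ℕ)
    (hσ : isFaceF k l (k + l + 3) σ) (hτ : isFaceF k l (k + l + 3) τ)
    (hdisj : Disjoint σ τ) (hcσ : σ.card = s + 1) (hcτ : τ.card = t + 1)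
    (hst : s + t = k + l) (hls : l < s) (hstle : s ≤ t)
    (h0σ : 0 ∉ σ) (h0τ : 0 ∉ τ) :
    {ν : Finset ℕ | isFaceF k l (k + l + 3) ν ∧ σ ⊆ ν ∧ ν.card = s + 2 ∧
      Disjoint ν τ}.ncard = 1 ∧
    {ν : Finset ℕ | isFaceF k l (k + l + 3) ν ∧ τ ⊆ ν ∧ ν.card = t + 2 ∧
      Disjoint ν σ}.ncard = 1 :=
  stmt6_general k l s t σ τ hσ hτ hdisj hcσ hcτ hst hls hstle h0σ h0τ
end

section
/- Fix integers 0 ≤ ℓ < k, let n = k + ℓ + 3, and let F be the simplicial complex on [n] ∪ {p} with faces all subsets of [n] of size ≤ k+1 and all {p} ∪ σ with σ ⊆ [n], |σ| ≤ ℓ+1. Then for every pair of disjoint faces σ, τ of F with dim σ + dim τ = k + ℓ, the number of (dim σ + 1)-dimensional faces of F containing σ and disjoint from τ has the same parity as the number of (dim τ + 1)-dimensional faces of F containing τ and disjoint from σ. -/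
open Finset

theorem ncard_cofaces_eq_card_filter {α : Type*} [DecidableEq α] (P : Finset α → Prop)
    [DecidablePred P] {V : Finset α} (hPV : ∀ ν, P ν → ν ⊆ V) {σ τ : Finset α}
    (hdisj : Disjoint σ τ) :
    {ν | P ν ∧ σ ⊆ ν ∧ #ν = #σ + 1 ∧ Disjoint ν τ}.ncard =
      #{v ∈ V \ (σ ∪ τ) | P (insert v σ)} := by
  have hinj : Set.InjOn (insert · σ) ↑{v ∈ V \ (σ ∪ τ) | P (insert v σ)} := by
    intro v hv w _ hvw
    simp only [coe_filter, mem_sdiff, mem_union, Set.mem_ofPred_eq, not_or] at hv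
    exact (insert_inj hv.1.2.1).1 hvw
  refine (congrArg Set.ncard ?_).trans (hinj.ncard_image.trans (Set.ncard_coe_finset _))
  ext ν
  simp only [Set.mem_ofPred_eq, Set.mem_image, coe_filter, mem_sdiff, mem_union, not_or]
  constructor
  · rintro ⟨hν, hσν, hcard, hντ⟩
    obtain ⟨v, hvσ, rfl⟩ := exists_eq_insert_iff.2 ⟨hσν, hcard.symm⟩
    exact ⟨v, ⟨⟨hPV _ hν (mem_insert_self v σ), hvσ, (disjoint_insert_left.1 hντ).1⟩, hν⟩, rfl⟩
  · rintro ⟨v, ⟨⟨-, hvσ, hvτ⟩, hν⟩, rfl⟩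
    exact ⟨hν, subset_insert v σ, card_insert_of_notMem hvσ, disjoint_insert_left.2 ⟨hvτ, hdisj⟩⟩

section ComplexF

variable {k l n : ℕ}

theorem isFaceF_insert_iff {σ : Finset ℕ} (hσ : σ ⊆ insert 0 (Icc 1 n)) {v : ℕ}
    (hv : v ∈ insert 0 (Icc 1 n)) (hvσ : v ∉ σ) :
    isFaceF k l n (insert v σ) ↔ #σ ≤ if v = 0 ∨ 0 ∈ σ then l + 1 else k := by
  simp only [isFaceF, insert_nonempty, insert_subset_iff, hv, hσ, true_and,
    card_insert_of_notMem hvσ, mem_insert, eq_comm (a := 0)]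
  split_ifs <;> omega

theorem card_sdiff_union_of_isFaceF {σ τ : Finset ℕ} (hσ : isFaceF k l n σ)
    (hτ : isFaceF k l n τ) (hdisj : Disjoint σ τ) :
    #(insert 0 (Icc 1 n) \ (σ ∪ τ)) = n + 1 - (#σ + #τ) := by
  rw [card_sdiff_of_subset (union_subset hσ.2.1 hτ.2.1), card_union_of_disjoint hdisj,
    card_insert_of_notMem (by simp), Nat.card_Icc, Nat.add_sub_cancel]

open Classical in
theorem card_filter_isFaceF_insert {σ τ : Finset ℕ} (hσ : isFaceF k l n σ) :
    #{v ∈ insert 0 (Icc 1 n) \ (σ ∪ τ) | isFaceF k l n (insert v σ)} =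
      ∑ v ∈ insert 0 (Icc 1 n) \ (σ ∪ τ),
        if #σ ≤ (if v = 0 ∨ 0 ∈ σ then l + 1 else k) then 1 else 0 := by
  rw [card_filter]
  refine sum_congr rfl fun v hv => ?_
  simp only [mem_sdiff, mem_union, not_or] at hv
  simp only [isFaceF_insert_iff hσ.2.1 hv.1 hv.2.1]

open Classical in
theorem even_card_filter_isFaceF_insert_of_zero_mem {σ τ : Finset ℕ} (hσ : isFaceF k l n σ)
    (h0 : 0 ∈ σ ∪ τ) (hfree : Even #(insert 0 (Icc 1 n) \ (σ ∪ τ))) :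
    Even #{v ∈ insert 0 (Icc 1 n) \ (σ ∪ τ) | isFaceF k l n (insert v σ)} := by
  rw [card_filter_isFaceF_insert hσ,
    sum_congr rfl (g := fun _ => if #σ ≤ (if 0 ∈ σ then l + 1 else k) then 1 else 0),
    sum_const, smul_eq_mul]
  · exact hfree.mul_right _
  · intro v hv
    have hv0 : v ≠ 0 := by rintro rfl; exact (mem_sdiff.1 hv).2 h0
    simp only [hv0, false_or]

open Classical in
theorem card_filter_isFaceF_insert_of_zero_notMem {σ τ : Finset ℕ} (hσ : isFaceF k l n σ)
    (h0 : 0 ∉ σ ∪ τ) (hfree : #(insert 0 (Icc 1 n) \ (σ ∪ τ)) = 2) :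
    #{v ∈ insert 0 (Icc 1 n) \ (σ ∪ τ) | isFaceF k l n (insert v σ)} =
      (if #σ ≤ l + 1 then 1 else 0) + (if #σ ≤ k then 1 else 0) := by
  have h0free : 0 ∈ insert 0 (Icc 1 n) \ (σ ∪ τ) := mem_sdiff.2 ⟨mem_insert_self _ _, h0⟩
  have h0σ : 0 ∉ σ := fun h => h0 (mem_union_left τ h)
  rw [card_filter_isFaceF_insert hσ, ← add_sum_erase _ _ h0free,
    sum_congr rfl (g := fun _ => if #σ ≤ k then 1 else 0), sum_const, card_erase_of_mem h0free,
    hfree]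
  · simp [h0σ]
  · intro v hv
    simp only [(mem_erase.1 hv).1, h0σ, or_self, if_false]

end ComplexF

/-- for every pair of disjoint faces σ, τ of F with
dim σ + dim τ = k + ℓ, the number of (dim σ + 1)-dimensional faces containing σ
and disjoint from τ has the same parity as the number of (dim τ + 1)-dimensional
faces containing τ and disjoint from σ. -/
theorem stmt8 (k l : ℕ) (hl : l < k) (σ τ : Finset ℕ)
    (hσ : isFaceF k l (k + l + 3) σ) (hτ : isFaceF k l (k + l + 3) τ)
    (hdisj : Disjoint σ τ) (hdim : σ.card + τ.card = k + l + 2) :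
    {ν : Finset ℕ | isFaceF k l (k + l + 3) ν ∧ σ ⊆ ν ∧ ν.card = σ.card + 1 ∧
      Disjoint ν τ}.ncard % 2 =
    {ν : Finset ℕ | isFaceF k l (k + l + 3) ν ∧ τ ⊆ ν ∧ ν.card = τ.card + 1 ∧
      Disjoint ν σ}.ncard % 2 := by
  classical
  have hV (ν : Finset ℕ) (hν : isFaceF k l (k + l + 3) ν) : ν ⊆ insert 0 (Icc 1 (k + l + 3)) :=
    hν.2.1
  rw [ncard_cofaces_eq_card_filter _ hV hdisj, ncard_cofaces_eq_card_filter _ hV hdisj.symm]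
  have hfree : #(insert 0 (Icc 1 (k + l + 3)) \ (σ ∪ τ)) = 2 := by
    rw [card_sdiff_union_of_isFaceF hσ hτ hdisj]; omega
  have hfree' : #(insert 0 (Icc 1 (k + l + 3)) \ (τ ∪ σ)) = 2 := union_comm σ τ ▸ hfree
  by_cases h0 : 0 ∈ σ ∪ τ
  · have h0' : 0 ∈ τ ∪ σ := union_comm σ τ ▸ h0
    rw [Nat.even_iff.1 (even_card_filter_isFaceF_insert_of_zero_mem hσ h0 (hfree ▸ even_two)),
      Nat.even_iff.1 (even_card_filter_isFaceF_insert_of_zero_mem hτ h0' (hfree' ▸ even_two))]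
  · have h0' : 0 ∉ τ ∪ σ := union_comm σ τ ▸ h0
    rw [card_filter_isFaceF_insert_of_zero_notMem hσ h0 hfree,
      card_filter_isFaceF_insert_of_zero_notMem hτ h0' hfree']
    split_ifs <;> omega
end
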